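/- arXiv:1406.3325 — 6 statements merged into one kernel-verified Lean document; each statement's English description precedes it below -/
import Mathlib

section
/- Assume γ + κ = 0 with κ > 0, let δ := e^{γ−κ} ∈ (0,1) and M := ∫₀¹ exp(s·B̃) ds. Then for every t ≥ 0 and every z = (z₁, z₂)ᵀ ∈ ℝ², M⁻¹·exp(t·B̃)·z = ((z₁+z₂)/2)·u + (δᵗ·log δ/(2(δ−1)))·(z₁−z₂)·v. -/
/-!
`B̃` has the eigenvectors `u` and `v`, with eigenvalues `γ + κ` and `γ - κ`. Hence `exp (s • B̃)`,
its integral `M` and `M⁻¹` all act diagonally in the basis `u, v`, with the scalar on `v` being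
`exp (s (γ - κ)) = δ ^ s`, `∫₀¹ δ ^ s ds = (δ - 1) / log δ` and its inverse. In the critical
case the eigenvalue on `u` is `0`, so all three act as the identity on `u`.
-/

open Matrix

/-- The symmetric matrix acting by `p` on `u = (1, 1)` and by `q` on `v = (1, -1)`. -/
noncomputable def diagUV (p q : ℝ) : Matrix (Fin 2) (Fin 2) ℝ :=
  !![(p + q) / 2, (p - q) / 2; (p - q) / 2, (p + q) / 2]

namespace diagUV

lemma eq_conj (p q : ℝ) :
    diagUV p q = !![1, 1; 1, -1] * diagonal ![p, q] * (!![1, 1; 1, -1])⁻¹ := by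
  have hinv : (!![1, 1; 1, -1] : Matrix (Fin 2) (Fin 2) ℝ)⁻¹ = (2 : ℝ)⁻¹ • !![1, 1; 1, -1] := by
    refine inv_eq_right_inv ?_
    ext i j; fin_cases i <;> fin_cases j <;> norm_num [mul_apply]
  rw [hinv]
  ext i j
  fin_cases i <;> fin_cases j <;>
    simp [diagUV, mul_apply, vecMul, dotProduct, Fin.sum_univ_two, diagonal_apply] <;> ring

lemma mul (p q p' q' : ℝ) : diagUV p q * diagUV p' q' = diagUV (p * p') (q * q') := by
  ext i j; fin_cases i <;> fin_cases j <;> simp [diagUV, mul_apply] <;> ring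

lemma one : diagUV 1 1 = 1 := by
  ext i j; fin_cases i <;> fin_cases j <;> norm_num [diagUV]

lemma inv {p q : ℝ} (hp : p ≠ 0) (hq : q ≠ 0) : (diagUV p q)⁻¹ = diagUV p⁻¹ q⁻¹ :=
  inv_eq_left_inv <| by rw [mul, inv_mul_cancel₀ hp, inv_mul_cancel₀ hq, one]

lemma mulVec (p q : ℝ) (z : Fin 2 → ℝ) :
    diagUV p q *ᵥ z = (p * ((z 0 + z 1) / 2)) • ![1, 1] + (q * ((z 0 - z 1) / 2)) • ![1, -1] := by
  ext i; fin_cases i <;> simp [diagUV, Matrix.mulVec, dotProduct] <;> ring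

lemma exp (a b : ℝ) :
    NormedSpace.exp (diagUV a b) = diagUV (Real.exp a) (Real.exp b) := by
  have hunit : IsUnit (!![1, 1; 1, -1] : Matrix (Fin 2) (Fin 2) ℝ) := by
    rw [isUnit_iff_isUnit_det]; norm_num [det_fin_two_of]
  have hdiag : NormedSpace.exp ![a, b] = ![Real.exp a, Real.exp b] := by
    ext i; fin_cases i <;> simp [Real.exp_eq_exp_ℝ]
  rw [eq_conj, Matrix.exp_conj _ _ hunit, exp_diagonal, hdiag, eq_conj]

lemma integral_apply {f g : ℝ → ℝ} {a b : ℝ} (hf : IntervalIntegrable f MeasureTheory.volume a b)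
    (hg : IntervalIntegrable g MeasureTheory.volume a b) (i j : Fin 2) :
    ∫ s in a..b, diagUV (f s) (g s) i j = diagUV (∫ s in a..b, f s) (∫ s in a..b, g s) i j := by
  fin_cases i <;> fin_cases j <;>
    simp [diagUV, intervalIntegral.integral_div, intervalIntegral.integral_add hf hg,
      intervalIntegral.integral_sub hf hg]

end diagUV

lemma smul_symm_eq_diagUV (s γ κ : ℝ) :
    s • (!![γ, κ; κ, γ] : Matrix (Fin 2) (Fin 2) ℝ) = diagUV (s * (γ + κ)) (s * (γ - κ)) := by
  ext i j; fin_cases i <;> fin_cases j <;> simp [diagUV] <;> ring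

lemma exp_smul_symm (s γ κ : ℝ) :
    NormedSpace.exp (s • (!![γ, κ; κ, γ] : Matrix (Fin 2) (Fin 2) ℝ))
      = diagUV (Real.exp (s * (γ + κ))) (Real.exp (s * (γ - κ))) := by
  rw [smul_symm_eq_diagUV, diagUV.exp]

lemma integral_exp_mul_of_ne_zero {c : ℝ} (hc : c ≠ 0) :
    ∫ s in (0 : ℝ)..1, Real.exp (s * c) = (Real.exp c - 1) / c := by
  rw [intervalIntegral.integral_comp_mul_right Real.exp hc, integral_exp]
  simp [div_eq_inv_mul]

lemma integral_exp_smul_symm_apply (γ κ : ℝ) (i j : Fin 2) :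
    ∫ s in (0 : ℝ)..1, NormedSpace.exp (s • (!![γ, κ; κ, γ] : Matrix (Fin 2) (Fin 2) ℝ)) i j
      = diagUV (∫ s in (0 : ℝ)..1, Real.exp (s * (γ + κ)))
          (∫ s in (0 : ℝ)..1, Real.exp (s * (γ - κ))) i j := by
  simp only [exp_smul_symm]
  exact diagUV.integral_apply ((by fun_prop : Continuous _).intervalIntegrable _ _)
    ((by fun_prop : Continuous _).intervalIntegrable _ _) i j

theorem integral_exp_inv_mulVec_exp_general (γ κ : ℝ) (hcrit : γ + κ = 0) (hκ : 0 < κ)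
    (δ : ℝ) (hδ : δ = Real.exp (γ - κ))
    (M : Matrix (Fin 2) (Fin 2) ℝ)
    (hM : ∀ i j, M i j = ∫ s in (0:ℝ)..1,
      NormedSpace.exp (s • (!![γ, κ; κ, γ] : Matrix (Fin 2) (Fin 2) ℝ)) i j)
    (t : ℝ) (z : Fin 2 → ℝ) :
    M⁻¹ *ᵥ (NormedSpace.exp (t • (!![γ, κ; κ, γ] : Matrix (Fin 2) (Fin 2) ℝ)) *ᵥ z)
      = ((z 0 + z 1) / 2) • (![1, 1] : Fin 2 → ℝ)
        + (δ ^ t * Real.log δ / (2 * (δ - 1)) * (z 0 - z 1)) • (![1, -1] : Fin 2 → ℝ) := by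
  have hlog : Real.log δ = γ - κ := by rw [hδ, Real.log_exp]
  have hlog_ne : Real.log δ ≠ 0 := by rw [hlog]; linarith
  have hδ_ne : δ - 1 ≠ 0 := by
    rw [hδ, sub_ne_zero, Ne, Real.exp_eq_one_iff]; linarith
  have hM' : M = diagUV 1 ((δ - 1) / Real.log δ) := by
    ext i j
    rw [hM, integral_exp_smul_symm_apply, hcrit, ← hlog, integral_exp_mul_of_ne_zero hlog_ne,
      Real.exp_log (hδ ▸ Real.exp_pos _)]
    simp
  have hexp : NormedSpace.exp (t • (!![γ, κ; κ, γ] : Matrix (Fin 2) (Fin 2) ℝ))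
      = diagUV 1 (δ ^ t) := by
    rw [exp_smul_symm, hcrit, mul_zero, Real.exp_zero,
      Real.rpow_def_of_pos (hδ ▸ Real.exp_pos _), hlog, mul_comm]
  rw [hM', hexp, mulVec_mulVec, diagUV.inv one_ne_zero (div_ne_zero hδ_ne hlog_ne),
    diagUV.mul, diagUV.mulVec]
  congr 2
  · ring
  · field_simp

/-- In the doubly symmetric critical case `γ + κ = 0`, `κ > 0`, with
`δ = e^{γ−κ} ∈ (0,1)` and `M = ∫₀¹ exp(s·B̃) ds` (entrywise integral), for every
`t ≥ 0` and every `z = (z₁, z₂)ᵀ ∈ ℝ²`,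
`M⁻¹·exp(t·B̃)·z = ((z₁+z₂)/2)·u + (δᵗ·log δ/(2(δ−1)))·(z₁−z₂)·v`,
where `u = (1,1)ᵀ` and `v = (1,−1)ᵀ`. -/
theorem integral_exp_inv_mulVec_exp (γ κ : ℝ) (hcrit : γ + κ = 0) (hκ : 0 < κ)
    (δ : ℝ) (hδ : δ = Real.exp (γ - κ))
    (M : Matrix (Fin 2) (Fin 2) ℝ)
    (hM : ∀ i j, M i j = ∫ s in (0:ℝ)..1,
      NormedSpace.exp (s • (!![γ, κ; κ, γ] : Matrix (Fin 2) (Fin 2) ℝ)) i j)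
    (t : ℝ) (ht : 0 ≤ t) (z : Fin 2 → ℝ) :
    M⁻¹ *ᵥ (NormedSpace.exp (t • (!![γ, κ; κ, γ] : Matrix (Fin 2) (Fin 2) ℝ)) *ᵥ z)
      = ((z 0 + z 1) / 2) • (![1, 1] : Fin 2 → ℝ)
        + (δ ^ t * Real.log δ / (2 * (δ - 1)) * (z 0 - z 1)) • (![1, -1] : Fin 2 → ℝ) :=
  integral_exp_inv_mulVec_exp_general γ κ hcrit hκ δ hδ M hM t z
end

section
/- Assume γ + κ = 0 with κ > 0, let δ := e^{γ−κ} ∈ (0,1) and M := ∫₀¹ exp(s·B̃) ds, and let ν be a measure on ℝ² with ∫ ‖z‖² ν(dz) < ∞. Then M⁻¹ · (∫₀¹ ∫_{ℝ²} (exp(t·B̃)z)(exp(t·B̃)z)ᵀ ν(dz) dt) · M⁻¹ = (1/4)·(∫ (z₁+z₂)² ν(dz))·[[1,1],[1,1]] + (1/2)·(∫ (z₁²−z₂²) ν(dz))·[[1,0],[0,−1]] + ((δ²−1)·log δ/(8(δ−1)²))·(∫ (z₁−z₂)² ν(dz))·[[1,−1],[−1,1]]. -/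
/-!
Write `P`, `Q` for the orthogonal projections onto `ℝ (1, 1)` and `ℝ (1, -1)`, so that
`B̃ = (γ + κ) • P + (γ - κ) • Q`. In the critical case `exp (t • B̃) = P + e^{tλ} • Q` with
`λ = γ - κ = log δ`. Hence `M = P + c • Q` and, with `Σ` the second-moment matrix of `ν`,
`W = PΣP + c • (PΣQ + QΣP) + d • QΣQ`, where `c = ∫₀¹ e^{tλ}` and `d = ∫₀¹ e^{2tλ}`.
Conjugating by `M⁻¹ = P + c⁻¹ • Q` rescales the three blocks to `1`, `1` and `d / c²`, and
each block is a second moment of `z₁ + z₂` and `z₁ - z₂` times a fixed matrix.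
-/

open Matrix MeasureTheory

section Idempotents

variable {𝕜 R : Type*} [CommRing 𝕜] [Ring R] [Algebra 𝕜 R]

lemma add_smul_mul_mul_add_smul (P Q X : R) (a : 𝕜) :
    (P + a • Q) * X * (P + a • Q) =
      P * X * P + a • (P * X * Q + Q * X * P) + (a * a) • (Q * X * Q) := by
  simp only [add_mul, mul_add, smul_mul_assoc, mul_smul_comm]
  module

variable {P Q : R}

lemma OrthogonalIdempotents.add_smul_mul_add_smul (h : OrthogonalIdempotents ![P, Q])
    (a b : 𝕜) : (P + a • Q) * (P + b • Q) = P + (a * b) • Q := by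
  have hP : P * P = P := h.idem 0
  have hQ : Q * Q = Q := h.idem 1
  have hPQ : P * Q = 0 := h.ortho zero_ne_one
  have hQP : Q * P = 0 := h.ortho one_ne_zero
  simp only [add_mul, mul_add, smul_mul_assoc, mul_smul_comm, smul_smul, hP, hQ, hPQ, hQP,
    smul_zero, add_zero, zero_add, mul_comm b a]

lemma OrthogonalIdempotents.add_smul_mul_blocks_mul_add_smul
    (h : OrthogonalIdempotents ![P, Q]) (X : R) (a b e : 𝕜) :
    (P + a • Q) * (P * X * P + b • (P * X * Q + Q * X * P) + e • (Q * X * Q)) * (P + a • Q) =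
      P * X * P + (a * b) • (P * X * Q + Q * X * P) + (a * a * e) • (Q * X * Q) := by
  have hP : P * P = P := h.idem 0
  have hQ : Q * Q = Q := h.idem 1
  have hPQ : P * Q = 0 := h.ortho zero_ne_one
  have hQP : Q * P = 0 := h.ortho one_ne_zero
  have hP' (Y : R) : P * (P * Y) = P * Y := by rw [← mul_assoc, hP]
  have hQ' (Y : R) : Q * (Q * Y) = Q * Y := by rw [← mul_assoc, hQ]
  have hPQ' (Y : R) : P * (Q * Y) = 0 := by rw [← mul_assoc, hPQ, zero_mul]
  have hQP' (Y : R) : Q * (P * Y) = 0 := by rw [← mul_assoc, hQP, zero_mul]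
  simp only [add_mul, mul_add, smul_mul_assoc, mul_smul_comm, smul_smul, mul_assoc, hP, hQ, hPQ,
    hQP, hP', hQ', hPQ', hQP', mul_zero, smul_zero, add_zero, zero_add]
  module

end Idempotents

lemma CompleteOrthogonalIdempotents.inv_add_smul {n 𝕜 : Type*} [Fintype n] [DecidableEq n]
    [Field 𝕜] {P Q : Matrix n n 𝕜} (h : CompleteOrthogonalIdempotents ![P, Q]) {c : 𝕜}
    (hc : c ≠ 0) : (P + c • Q)⁻¹ = P + c⁻¹ • Q := by
  refine inv_eq_right_inv ?_
  rw [h.toOrthogonalIdempotents.add_smul_mul_add_smul, mul_inv_cancel₀ hc, one_smul]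
  exact (CompleteOrthogonalIdempotents.pair_iff'ₛ.mp h).2.2

section IntervalIntegral

lemma integral_exp_mul (a b l : ℝ) (hl : l ≠ 0) :
    ∫ t in a..b, Real.exp (t * l) = (Real.exp (b * l) - Real.exp (a * l)) / l := by
  rw [intervalIntegral.integral_comp_mul_right Real.exp hl, integral_exp, smul_eq_mul,
    inv_mul_eq_div]

variable {m n : Type*} {a b : ℝ} {f g : ℝ → ℝ}

lemma intervalIntegral_add_smul_apply (A B : Matrix m n ℝ)
    (hf : IntervalIntegrable f volume a b) (i : m) (j : n) :
    ∫ t in a..b, (A + f t • B) i j = ((b - a) • A + (∫ t in a..b, f t) • B) i j := by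
  simp only [Matrix.add_apply, Matrix.smul_apply, smul_eq_mul]
  rw [intervalIntegral.integral_add intervalIntegrable_const (hf.mul_const _),
    intervalIntegral.integral_const, intervalIntegral.integral_mul_const, smul_eq_mul]

lemma intervalIntegral_add_smul_add_smul_apply (A B C : Matrix m n ℝ)
    (hf : IntervalIntegrable f volume a b) (hg : IntervalIntegrable g volume a b)
    (i : m) (j : n) :
    ∫ t in a..b, (A + f t • B + g t • C) i j =
      ((b - a) • A + (∫ t in a..b, f t) • B + (∫ t in a..b, g t) • C) i j := by
  simp only [Matrix.add_apply, Matrix.smul_apply, smul_eq_mul]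
  rw [intervalIntegral.integral_add (intervalIntegrable_const.add (hf.mul_const _))
      (hg.mul_const _), intervalIntegral.integral_add intervalIntegrable_const (hf.mul_const _),
    intervalIntegral.integral_const, intervalIntegral.integral_mul_const,
    intervalIntegral.integral_mul_const, smul_eq_mul]

variable {l : ℝ}

lemma intervalIntegral_add_exp_smul_apply (A B : Matrix m n ℝ) (hl : l ≠ 0) (i : m) (j : n) :
    ∫ t in (0 : ℝ)..1, (A + Real.exp (t * l) • B) i j =
      (A + ((Real.exp l - 1) / l) • B) i j := by
  rw [intervalIntegral_add_smul_apply A B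
      ((by fun_prop : Continuous fun t => Real.exp (t * l)).intervalIntegrable 0 1),
    integral_exp_mul 0 1 l hl]
  simp

lemma intervalIntegral_add_exp_smul_mul_mul_add_exp_smul_apply [Fintype n] [DecidableEq n]
    (P Q X : Matrix n n ℝ) (hl : l ≠ 0) (i j : n) :
    ∫ t in (0 : ℝ)..1, ((P + Real.exp (t * l) • Q) * X * (P + Real.exp (t * l) • Q)) i j =
      (P * X * P + ((Real.exp l - 1) / l) • (P * X * Q + Q * X * P)
        + ((Real.exp (2 * l) - 1) / (2 * l)) • (Q * X * Q)) i j := by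
  have hsq (t : ℝ) : Real.exp (t * l) * Real.exp (t * l) = Real.exp (t * (2 * l)) := by
    rw [← Real.exp_add]; ring_nf
  simp_rw [add_smul_mul_mul_add_smul, hsq]
  rw [intervalIntegral_add_smul_add_smul_apply _ _ _
      ((by fun_prop : Continuous fun t => Real.exp (t * l)).intervalIntegrable 0 1)
      ((by fun_prop : Continuous fun t => Real.exp (t * (2 * l))).intervalIntegrable 0 1),
    integral_exp_mul 0 1 l hl, integral_exp_mul 0 1 (2 * l) (mul_ne_zero two_ne_zero hl)]
  simp

end IntervalIntegral

section SecondMoment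

variable {n : Type*} {ν : Measure (n → ℝ)}

noncomputable def secondMoment (ν : Measure (n → ℝ)) : Matrix n n ℝ :=
  of fun i j => ∫ z, z i * z j ∂ν

lemma secondMoment_transpose (ν : Measure (n → ℝ)) : (secondMoment ν)ᵀ = secondMoment ν := by
  ext i j
  simp only [transpose_apply, secondMoment, of_apply, mul_comm]

variable [Fintype n]

lemma integrable_mul_apply_of_integrable_norm_sq
    (hν : Integrable (fun z : n → ℝ => ‖z‖ ^ 2) ν) (i j : n) :
    Integrable (fun z : n → ℝ => z i * z j) ν := by
  refine hν.mono' (by fun_prop) (ae_of_all _ fun z => ?_)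
  rw [norm_mul, sq]
  exact mul_le_mul (norm_le_pi_norm z i) (norm_le_pi_norm z j) (norm_nonneg _) (norm_nonneg _)

lemma integral_dotProduct_mul_dotProduct (hν : Integrable (fun z : n → ℝ => ‖z‖ ^ 2) ν)
    (u v : n → ℝ) : ∫ z, (u ⬝ᵥ z) * (v ⬝ᵥ z) ∂ν = u ⬝ᵥ secondMoment ν *ᵥ v := by
  have hint k l := (integrable_mul_apply_of_integrable_norm_sq hν k l).const_mul (u k * v l)
  have hexpand : (fun z : n → ℝ => (u ⬝ᵥ z) * (v ⬝ᵥ z)) =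
      fun z => ∑ k, ∑ l, u k * v l * (z k * z l) := by
    funext z
    simp only [dotProduct, Finset.sum_mul_sum]
    exact Finset.sum_congr rfl fun k _ => Finset.sum_congr rfl fun l _ => by ring
  rw [hexpand, integral_finsetSum _ fun k _ => integrable_finsetSum _ fun l _ => hint k l]
  simp only [dotProduct, mulVec, secondMoment, of_apply, Finset.mul_sum]
  refine Finset.sum_congr rfl fun k _ => ?_
  rw [integral_finsetSum _ fun l _ => hint k l]
  refine Finset.sum_congr rfl fun l _ => ?_
  rw [integral_const_mul]
  ring

lemma integral_mulVec_mul_mulVec (hν : Integrable (fun z : n → ℝ => ‖z‖ ^ 2) ν)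
    (A B : Matrix n n ℝ) (i j : n) :
    ∫ z, (A *ᵥ z) i * (B *ᵥ z) j ∂ν = (A * secondMoment ν * Bᵀ) i j := by
  rw [mul_mul_apply, transpose_transpose]
  exact integral_dotProduct_mul_dotProduct hν (A i) (B j)

end SecondMoment

/-- Spectral projection of `!![x, y; y, x]` onto the eigenline `ℝ (1, 1)`. -/
noncomputable def evenProj : Matrix (Fin 2) (Fin 2) ℝ := !![1 / 2, 1 / 2; 1 / 2, 1 / 2]

/-- Spectral projection of `!![x, y; y, x]` onto the eigenline `ℝ (1, -1)`. -/
noncomputable def oddProj : Matrix (Fin 2) (Fin 2) ℝ := !![1 / 2, -1 / 2; -1 / 2, 1 / 2]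

lemma completeOrthogonalIdempotents_evenProj_oddProj :
    CompleteOrthogonalIdempotents ![evenProj, oddProj] := by
  refine CompleteOrthogonalIdempotents.pair_iff'ₛ.mpr ⟨?_, ?_, ?_⟩ <;>
    ext i j <;> fin_cases i <;> fin_cases j <;> simp [evenProj, oddProj, mul_apply] <;> norm_num

lemma evenProj_transpose : evenProjᵀ = evenProj := by
  ext i j; fin_cases i <;> fin_cases j <;> rfl

lemma oddProj_transpose : oddProjᵀ = oddProj := by
  ext i j; fin_cases i <;> fin_cases j <;> rfl

lemma exp_doublySymm (x y : ℝ) :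
    NormedSpace.exp !![x, y; y, x] =
      Real.exp (x + y) • evenProj + Real.exp (x - y) • oddProj := by
  let U : Matrix (Fin 2) (Fin 2) ℝ := !![1, 1; 1, -1]
  have hU_inv : U⁻¹ = !![1 / 2, 1 / 2; 1 / 2, -1 / 2] := by
    refine inv_eq_right_inv ?_
    ext i j; fin_cases i <;> fin_cases j <;> simp [U, mul_apply] <;> norm_num
  have hU : IsUnit U := by
    rw [isUnit_iff_isUnit_det, det_fin_two_of]; norm_num
  have hdiag : !![x, y; y, x] = U * diagonal ![x + y, x - y] * U⁻¹ := by
    rw [hU_inv]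
    ext i j
    fin_cases i <;> fin_cases j <;>
      simp [U, mul_apply, vecMul_diagonal, Fin.sum_univ_two] <;> ring
  have hexp_vec : NormedSpace.exp ![x + y, x - y] = ![Real.exp (x + y), Real.exp (x - y)] := by
    ext i; fin_cases i <;> simp [Real.exp_eq_exp_ℝ]
  rw [hdiag, Matrix.exp_conj _ _ hU, exp_diagonal, hexp_vec, hU_inv]
  ext i j
  fin_cases i <;> fin_cases j <;>
    simp [U, evenProj, oddProj, mul_apply, vecMul_diagonal, Fin.sum_univ_two] <;> ring

lemma exp_smul_doublySymm (t x y : ℝ) :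
    NormedSpace.exp (t • !![x, y; y, x]) =
      Real.exp (t * (x + y)) • evenProj + Real.exp (t * (x - y)) • oddProj := by
  simp only [smul_of, smul_cons, smul_eq_mul, smul_empty]
  rw [exp_doublySymm, mul_add, mul_sub]

section FinTwo

variable {ν : Measure (Fin 2 → ℝ)}

lemma evenProj_mul_secondMoment_mul_evenProj
    (hν : Integrable (fun z : Fin 2 → ℝ => ‖z‖ ^ 2) ν) :
    evenProj * secondMoment ν * evenProj =
      ((1 / 4 : ℝ) * ∫ z, (z 0 + z 1) ^ 2 ∂ν) • !![1, 1; 1, 1] := by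
  have h : ∫ z, (z 0 + z 1) ^ 2 ∂ν = ![1, 1] ⬝ᵥ secondMoment ν *ᵥ ![1, 1] := by
    rw [← integral_dotProduct_mul_dotProduct hν]
    congr 1 with z
    simp only [dotProduct, Fin.sum_univ_two, cons_val_zero, cons_val_one, cons_val_fin_one]
    ring
  rw [h]
  ext i j
  fin_cases i <;> fin_cases j <;>
    simp [evenProj, mul_apply, dotProduct, mulVec, vecMul, Fin.sum_univ_two] <;> ring

lemma oddProj_mul_secondMoment_mul_oddProj
    (hν : Integrable (fun z : Fin 2 → ℝ => ‖z‖ ^ 2) ν) :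
    oddProj * secondMoment ν * oddProj =
      ((1 / 4 : ℝ) * ∫ z, (z 0 - z 1) ^ 2 ∂ν) • !![1, -1; -1, 1] := by
  have h : ∫ z, (z 0 - z 1) ^ 2 ∂ν = ![1, -1] ⬝ᵥ secondMoment ν *ᵥ ![1, -1] := by
    rw [← integral_dotProduct_mul_dotProduct hν]
    congr 1 with z
    simp only [dotProduct, Fin.sum_univ_two, cons_val_zero, cons_val_one, cons_val_fin_one]
    ring
  rw [h]
  ext i j
  fin_cases i <;> fin_cases j <;>
    simp [oddProj, mul_apply, dotProduct, mulVec, vecMul, Fin.sum_univ_two] <;> ring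

lemma evenProj_mul_secondMoment_mul_oddProj_add
    (hν : Integrable (fun z : Fin 2 → ℝ => ‖z‖ ^ 2) ν) :
    evenProj * secondMoment ν * oddProj + oddProj * secondMoment ν * evenProj =
      ((1 / 2 : ℝ) * ∫ z, (z 0 ^ 2 - z 1 ^ 2) ∂ν) • !![1, 0; 0, -1] := by
  have h : ∫ z, (z 0 ^ 2 - z 1 ^ 2) ∂ν = ![1, 1] ⬝ᵥ secondMoment ν *ᵥ ![1, -1] := by
    rw [← integral_dotProduct_mul_dotProduct hν]
    congr 1 with z
    simp only [dotProduct, Fin.sum_univ_two, cons_val_zero, cons_val_one, cons_val_fin_one]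
    ring
  have hsymm : secondMoment ν 1 0 = secondMoment ν 0 1 :=
    congrFun (congrFun (secondMoment_transpose ν) 0) 1
  rw [h]
  ext i j
  fin_cases i <;> fin_cases j <;>
    simp [evenProj, oddProj, mul_apply, dotProduct, mulVec, vecMul, Fin.sum_univ_two, hsymm] <;>
    ring

end FinTwo

/-- In the doubly symmetric critical case `γ + κ = 0`, `κ > 0`, with
`δ = e^{γ−κ} ∈ (0,1)`, `M = ∫₀¹ exp(s·B̃) ds` (entrywise integral), and a measure `ν`
on `ℝ²` with finite second moment, one has
`M⁻¹ · (∫₀¹ ∫ (exp(t·B̃)z)(exp(t·B̃)z)ᵀ ν(dz) dt) · M⁻¹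
  = (1/4)·(∫ (z₁+z₂)² dν)·[[1,1],[1,1]] + (1/2)·(∫ (z₁²−z₂²) dν)·[[1,0],[0,−1]]
    + ((δ²−1)·log δ/(8(δ−1)²))·(∫ (z₁−z₂)² dν)·[[1,−1],[−1,1]]`. -/
theorem integral_exp_inv_quadratic_form (γ κ : ℝ) (hcrit : γ + κ = 0) (hκ : 0 < κ)
    (δ : ℝ) (hδ : δ = Real.exp (γ - κ))
    (M : Matrix (Fin 2) (Fin 2) ℝ)
    (hM : ∀ i j, M i j = ∫ s in (0:ℝ)..1,
      NormedSpace.exp (s • (!![γ, κ; κ, γ] : Matrix (Fin 2) (Fin 2) ℝ)) i j)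
    (ν : Measure (Fin 2 → ℝ)) (hν : Integrable (fun z : Fin 2 → ℝ => ‖z‖ ^ 2) ν)
    (W : Matrix (Fin 2) (Fin 2) ℝ)
    (hW : ∀ i j, W i j = ∫ t in (0:ℝ)..1, ∫ z : Fin 2 → ℝ,
        (NormedSpace.exp (t • (!![γ, κ; κ, γ] : Matrix (Fin 2) (Fin 2) ℝ)) *ᵥ z) i
          * (NormedSpace.exp (t • (!![γ, κ; κ, γ] : Matrix (Fin 2) (Fin 2) ℝ)) *ᵥ z) j
        ∂ν) :
    M⁻¹ * W * M⁻¹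
      = ((1 / 4 : ℝ) * ∫ z : Fin 2 → ℝ, (z 0 + z 1) ^ 2 ∂ν) •
          (!![1, 1; 1, 1] : Matrix (Fin 2) (Fin 2) ℝ)
        + ((1 / 2 : ℝ) * ∫ z : Fin 2 → ℝ, (z 0 ^ 2 - z 1 ^ 2) ∂ν) •
          (!![1, 0; 0, -1] : Matrix (Fin 2) (Fin 2) ℝ)
        + ((δ ^ 2 - 1) * Real.log δ / (8 * (δ - 1) ^ 2) * ∫ z : Fin 2 → ℝ, (z 0 - z 1) ^ 2 ∂ν) •
          (!![1, -1; -1, 1] : Matrix (Fin 2) (Fin 2) ℝ) := by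
  set l := γ - κ
  have hl : l ≠ 0 := (by linarith : l < 0).ne
  have hexp (t : ℝ) :
      NormedSpace.exp (t • !![γ, κ; κ, γ]) = evenProj + Real.exp (t * l) • oddProj := by
    rw [exp_smul_doublySymm, hcrit, mul_zero, Real.exp_zero, one_smul]
  have hMc : M = evenProj + ((Real.exp l - 1) / l) • oddProj := by
    ext i j
    simp_rw [hM, hexp]
    exact intervalIntegral_add_exp_smul_apply _ _ hl i j
  have hWc : W = evenProj * secondMoment ν * evenProj
      + ((Real.exp l - 1) / l) • (evenProj * secondMoment ν * oddProj
        + oddProj * secondMoment ν * evenProj)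
      + ((Real.exp (2 * l) - 1) / (2 * l)) • (oddProj * secondMoment ν * oddProj) := by
    ext i j
    simp_rw [hW, integral_mulVec_mul_mulVec hν, hexp, transpose_add, transpose_smul,
      evenProj_transpose, oddProj_transpose]
    exact intervalIntegral_add_exp_smul_mul_mul_add_exp_smul_apply _ _ _ hl i j
  have he : Real.exp l - 1 ≠ 0 := sub_ne_zero.mpr ((Real.exp_eq_one_iff l).not.mpr hl)
  have hc : (Real.exp l - 1) / l ≠ 0 := div_ne_zero he hl
  have hproj := completeOrthogonalIdempotents_evenProj_oddProj
  rw [hMc, hWc, hproj.inv_add_smul hc,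
    hproj.toOrthogonalIdempotents.add_smul_mul_blocks_mul_add_smul,
    evenProj_mul_secondMoment_mul_evenProj hν, evenProj_mul_secondMoment_mul_oddProj_add hν,
    oddProj_mul_secondMoment_mul_oddProj hν, inv_mul_cancel₀ hc, one_smul, smul_smul]
  congr 2
  rw [hδ, Real.log_exp, ← Real.exp_nat_mul, Nat.cast_ofNat]
  field_simp
  ring
end

section
/- Let n ∈ ℕ, let x₁, …, xₙ ∈ ℝ² with the convention x₀ := 0, and set u_k := ⟨(1,1)ᵀ, x_k⟩ and v_k := ⟨(1,−1)ᵀ, x_k⟩ for k = 0, …, n. Assume n·Σ_{k=1}^n u_{k−1}² − (Σ_{k=1}^n u_{k−1})² > 0 and n·Σ_{k=1}^n v_{k−1}² − (Σ_{k=1}^n v_{k−1})² > 0. Then the function ℝ⁴ ∋ (ρ′, δ′, β̄′) ↦ Q_n(ρ′, δ′, β̄′) := Σ_{k=1}^n ‖x_k − (1/2)·[[ρ′+δ′, ρ′−δ′],[ρ′−δ′, ρ′+δ′]]·x_{k−1} − β̄′‖² has a unique global minimizer, given by ρ̂_n = (n·Σ_{k=1}^n u_k u_{k−1} − Σ_{k=1}^n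 u_k · Σ_{k=1}^n u_{k−1})/(n·Σ_{k=1}^n u_{k−1}² − (Σ_{k=1}^n u_{k−1})²), δ̂_n = (n·Σ_{k=1}^n v_k v_{k−1} − Σ_{k=1}^n v_k · Σ_{k=1}^n v_{k−1})/(n·Σ_{k=1}^n v_{k−1}² − (Σ_{k=1}^n v_{k−1})²), and β̂_n = (1/n)·Σ_{k=1}^n x_k − (1/(2n))·Σ_{k=1}^n [[u_{k−1}, v_{k−1}],[u_{k−1}, −v_{k−1}]]·(ρ̂_n, δ̂_n)ᵀ. -/
/-!
In the coordinates `u = x 0 + x 1`, `v = x 0 - x 1` the matrix of the model is diagonal, so `2 Q`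
splits into the residual sums of squares of two decoupled simple linear regressions: `u k` on
`u (k - 1)` with slope `ρ'` and intercept `β̄' 0 + β̄' 1`, and `v k` on `v (k - 1)` with slope `δ'`
and intercept `β̄' 0 - β̄' 1`. At the ordinary least squares point of a simple regression the normal
equations hold, so the residual sum of squares exceeds its value there by a quadratic form in the
parameter differences whose determinant is `n Σ z² - (Σ z)² > 0`.
-/

open Finset

theorem forall_le_iff_eq_of_forall_ne_lt {α β : Type*} [Preorder β] {f : α → β} {m : α}
    (h : ∀ p, p ≠ m → f m < f p) (p : α) : (∀ q, f p ≤ f q) ↔ p = m := by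
  refine ⟨fun hp => by_contra fun hne => (hp m).not_gt (h p hne), ?_⟩
  rintro rfl q
  rcases eq_or_ne q p with rfl | hq
  · exact le_rfl
  · exact (h q hq).le

theorem add_lt_add_of_forall_ne_lt {α β M : Type*} [AddCommMonoid M] [PartialOrder M]
    [IsOrderedCancelAddMonoid M] {f : α → M} {g : β → M} {a : α} {b : β}
    (hf : ∀ x, x ≠ a → f a < f x) (hg : ∀ y, y ≠ b → g b < g y) {x : α} {y : β}
    (h : x ≠ a ∨ y ≠ b) : f a + g b < f x + g y := by
  have hf_le := (forall_le_iff_eq_of_forall_ne_lt hf a).2 rfl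
  have hg_le := (forall_le_iff_eq_of_forall_ne_lt hg b).2 rfl
  rcases h with hx | hy
  · exact add_lt_add_of_lt_of_le (hf x hx) (hg_le y)
  · exact add_lt_add_of_le_of_lt (hf_le x) (hg y hy)

section SimpleLinearRegression

variable {ι : Type*} (s : Finset ι) (y z : ι → ℝ)

def residualSumSq (θ : ℝ × ℝ) : ℝ := ∑ k ∈ s, (y k - θ.1 * z k - θ.2) ^ 2

variable {s y z}

theorem residualSumSq_eq_add_of_normal_equations {a c : ℝ}
    (hz : ∑ k ∈ s, z k * (y k - a * z k - c) = 0) (h1 : ∑ k ∈ s, (y k - a * z k - c) = 0)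
    (a' c' : ℝ) :
    residualSumSq s y z (a', c') = residualSumSq s y z (a, c)
      + ((a' - a) ^ 2 * ∑ k ∈ s, z k ^ 2 + 2 * (a' - a) * (c' - c) * ∑ k ∈ s, z k
        + #s * (c' - c) ^ 2) := by
  calc residualSumSq s y z (a', c')
      = ∑ k ∈ s, ((y k - a * z k - c) ^ 2 + (a' - a) ^ 2 * z k ^ 2
          + 2 * (a' - a) * (c' - c) * z k + (c' - c) ^ 2
          - 2 * (a' - a) * (z k * (y k - a * z k - c)) - 2 * (c' - c) * (y k - a * z k - c)) :=
        sum_congr rfl fun k _ => by ring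
    _ = _ := by
        simp only [residualSumSq, sum_add_distrib, sum_sub_distrib, ← mul_sum, hz, h1,
          sum_const, nsmul_eq_mul]
        ring

theorem quadratic_form_pos {N A B p q : ℝ} (hN : 0 ≤ N) (hD : 0 < N * B - A ^ 2)
    (hpq : p ≠ 0 ∨ q ≠ 0) : 0 < p ^ 2 * B + 2 * p * q * A + N * q ^ 2 := by
  replace hN : 0 < N := hN.lt_of_ne <| by rintro rfl; nlinarith [sq_nonneg A]
  by_cases hp : p = 0
  · subst hp
    have hq := sq_pos_of_ne_zero (hpq.resolve_left (by simp))
    simpa using mul_pos hN hq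
  · refine pos_of_mul_pos_right (a := N) ?_ hN.le
    calc 0 < (N * q + p * A) ^ 2 + p ^ 2 * (N * B - A ^ 2) := by
          have := sq_pos_of_ne_zero hp
          positivity
      _ = N * (p ^ 2 * B + 2 * p * q * A + N * q ^ 2) := by ring

theorem residualSumSq_lt_of_ne (hD : 0 < #s * ∑ k ∈ s, z k ^ 2 - (∑ k ∈ s, z k) ^ 2) {a c : ℝ}
    (ha : a = (#s * ∑ k ∈ s, y k * z k - (∑ k ∈ s, y k) * ∑ k ∈ s, z k)
      / (#s * ∑ k ∈ s, z k ^ 2 - (∑ k ∈ s, z k) ^ 2))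
    (hc : c = (∑ k ∈ s, y k - a * ∑ k ∈ s, z k) / #s) {θ : ℝ × ℝ} (hne : θ ≠ (a, c)) :
    residualSumSq s y z (a, c) < residualSumSq s y z θ := by
  have hs : (#s : ℝ) ≠ 0 := by
    rintro hs
    rw [hs] at hD
    nlinarith [sq_nonneg (∑ k ∈ s, z k)]
  have h1 : ∑ k ∈ s, (y k - a * z k - c) = 0 := by
    simp only [sum_sub_distrib, ← mul_sum, sum_const, nsmul_eq_mul, hc]
    field_simp
    ring
  have hz : ∑ k ∈ s, z k * (y k - a * z k - c) = 0 := by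
    have hexpand : ∑ k ∈ s, z k * (y k - a * z k - c)
        = ∑ k ∈ s, y k * z k - a * ∑ k ∈ s, z k ^ 2 - c * ∑ k ∈ s, z k := by
      simp only [mul_sum, ← sum_sub_distrib]
      exact sum_congr rfl fun k _ => by ring
    rw [hexpand, hc, ha]
    field_simp
    ring
  rw [residualSumSq_eq_add_of_normal_equations hz h1 θ.1 θ.2, lt_add_iff_pos_right]
  refine quadratic_form_pos (Nat.cast_nonneg _) hD ?_
  by_contra! h
  exact hne (Prod.ext (sub_eq_zero.1 h.1) (sub_eq_zero.1 h.2))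

end SimpleLinearRegression

theorem cls_estimator_unique_minimizer_general
    (n : ℕ) (x : ℕ → Fin 2 → ℝ)
    (u v : ℕ → ℝ)
    (hu : ∀ k, u k = x k 0 + x k 1) (hv : ∀ k, v k = x k 0 - x k 1)
    (hDu : 0 < (n : ℝ) * ∑ k ∈ Icc 1 n, u (k - 1) ^ 2 - (∑ k ∈ Icc 1 n, u (k - 1)) ^ 2)
    (hDv : 0 < (n : ℝ) * ∑ k ∈ Icc 1 n, v (k - 1) ^ 2 - (∑ k ∈ Icc 1 n, v (k - 1)) ^ 2)
    (Q : ℝ → ℝ → (Fin 2 → ℝ) → ℝ)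
    (hQ : ∀ (r d : ℝ) (b : Fin 2 → ℝ), Q r d b = ∑ k ∈ Icc 1 n,
        ((x k 0 - ((r + d) * x (k - 1) 0 + (r - d) * x (k - 1) 1) / 2 - b 0) ^ 2
          + (x k 1 - ((r - d) * x (k - 1) 0 + (r + d) * x (k - 1) 1) / 2 - b 1) ^ 2))
    (ρhat δhat : ℝ) (βhat : Fin 2 → ℝ)
    (hρhat : ρhat =
      ((n : ℝ) * ∑ k ∈ Icc 1 n, u k * u (k - 1)
          - (∑ k ∈ Icc 1 n, u k) * ∑ k ∈ Icc 1 n, u (k - 1))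
        / ((n : ℝ) * ∑ k ∈ Icc 1 n, u (k - 1) ^ 2 - (∑ k ∈ Icc 1 n, u (k - 1)) ^ 2))
    (hδhat : δhat =
      ((n : ℝ) * ∑ k ∈ Icc 1 n, v k * v (k - 1)
          - (∑ k ∈ Icc 1 n, v k) * ∑ k ∈ Icc 1 n, v (k - 1))
        / ((n : ℝ) * ∑ k ∈ Icc 1 n, v (k - 1) ^ 2 - (∑ k ∈ Icc 1 n, v (k - 1)) ^ 2))
    (hβhat0 : βhat 0 = (1 / (n : ℝ)) * ∑ k ∈ Icc 1 n, x k 0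
        - (1 / (2 * (n : ℝ))) * ∑ k ∈ Icc 1 n, (u (k - 1) * ρhat + v (k - 1) * δhat))
    (hβhat1 : βhat 1 = (1 / (n : ℝ)) * ∑ k ∈ Icc 1 n, x k 1
        - (1 / (2 * (n : ℝ))) * ∑ k ∈ Icc 1 n, (u (k - 1) * ρhat - v (k - 1) * δhat)) :
    ∀ (r d : ℝ) (b : Fin 2 → ℝ),
      (∀ (r' d' : ℝ) (b' : Fin 2 → ℝ), Q r d b ≤ Q r' d' b')
        ↔ (r = ρhat ∧ d = δhat ∧ b = βhat) := by
  have hcard : (#(Icc 1 n) : ℝ) = n := by simp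
  have hQ_eq : ∀ r d b,
      2 * Q r d b = residualSumSq (Icc 1 n) u (fun k => u (k - 1)) (r, b 0 + b 1)
        + residualSumSq (Icc 1 n) v (fun k => v (k - 1)) (d, b 0 - b 1) := by
    intro r d b
    rw [hQ, residualSumSq, residualSumSq, ← sum_add_distrib, mul_sum]
    refine sum_congr rfl fun k _ => ?_
    rw [hu k, hu (k - 1), hv k, hv (k - 1)]
    ring
  have hβ_add : βhat 0 + βhat 1
      = (∑ k ∈ Icc 1 n, u k - ρhat * ∑ k ∈ Icc 1 n, u (k - 1)) / #(Icc 1 n) := by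
    simp only [hcard, hβhat0, hβhat1, hu, sum_add_distrib, sum_sub_distrib, ← sum_mul]
    ring
  have hβ_sub : βhat 0 - βhat 1
      = (∑ k ∈ Icc 1 n, v k - δhat * ∑ k ∈ Icc 1 n, v (k - 1)) / #(Icc 1 n) := by
    simp only [hcard, hβhat0, hβhat1, hv, sum_add_distrib, sum_sub_distrib, ← sum_mul]
    ring
  have hU_lt := fun θ => residualSumSq_lt_of_ne (θ := θ) (by rwa [hcard]) (by rwa [hcard]) hβ_add
  have hV_lt := fun θ => residualSumSq_lt_of_ne (θ := θ) (by rwa [hcard]) (by rwa [hcard]) hβ_sub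
  have hQ_lt : ∀ p : ℝ × ℝ × (Fin 2 → ℝ), p ≠ (ρhat, δhat, βhat) →
      Q ρhat δhat βhat < Q p.1 p.2.1 p.2.2 := by
    rintro ⟨r, d, b⟩ hne
    have hne' : (r, b 0 + b 1) ≠ (ρhat, βhat 0 + βhat 1) ∨
        (d, b 0 - b 1) ≠ (δhat, βhat 0 - βhat 1) := by
      by_contra! h
      simp only [Prod.mk.injEq] at h
      refine hne (Prod.ext h.1.1 (Prod.ext h.2.1 (funext fun i => ?_)))
      fin_cases i <;> simp <;> linarith
    linarith [hQ_eq r d b, hQ_eq ρhat δhat βhat, add_lt_add_of_forall_ne_lt hU_lt hV_lt hne']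
  intro r d b
  simpa [Prod.forall, Prod.ext_iff] using
    forall_le_iff_eq_of_forall_ne_lt (f := fun p => Q p.1 p.2.1 p.2.2) hQ_lt (r, d, b)

/-- **Existence and uniqueness of the CLS estimator.**
Let `x₀ := 0` and `x₁, …, xₙ ∈ ℝ²`, with `u_k := x_k(0) + x_k(1)` and
`v_k := x_k(0) − x_k(1)`.  If `n·Σ u_{k−1}² − (Σ u_{k−1})² > 0` and
`n·Σ v_{k−1}² − (Σ v_{k−1})² > 0`, then the conditional least squares objective
`Q(ρ′, δ′, β̄′) = Σ_{k=1}^n ‖x_k − (1/2)·[[ρ′+δ′, ρ′−δ′],[ρ′−δ′, ρ′+δ′]]·x_{k−1} − β̄′‖²`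
(Euclidean norm, written via coordinates) has a unique global minimizer `(ρ̂, δ̂, β̂)`,
given by the explicit formulas of the paper. -/
theorem cls_estimator_unique_minimizer
    (n : ℕ) (hn : 0 < n) (x : ℕ → Fin 2 → ℝ) (hx0 : x 0 = 0)
    (u v : ℕ → ℝ)
    (hu : ∀ k, u k = x k 0 + x k 1) (hv : ∀ k, v k = x k 0 - x k 1)
    (hDu : 0 < (n : ℝ) * ∑ k ∈ Icc 1 n, u (k - 1) ^ 2 - (∑ k ∈ Icc 1 n, u (k - 1)) ^ 2)
    (hDv : 0 < (n : ℝ) * ∑ k ∈ Icc 1 n, v (k - 1) ^ 2 - (∑ k ∈ Icc 1 n, v (k - 1)) ^ 2)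
    (Q : ℝ → ℝ → (Fin 2 → ℝ) → ℝ)
    (hQ : ∀ (r d : ℝ) (b : Fin 2 → ℝ), Q r d b = ∑ k ∈ Icc 1 n,
        ((x k 0 - ((r + d) * x (k - 1) 0 + (r - d) * x (k - 1) 1) / 2 - b 0) ^ 2
          + (x k 1 - ((r - d) * x (k - 1) 0 + (r + d) * x (k - 1) 1) / 2 - b 1) ^ 2))
    (ρhat δhat : ℝ) (βhat : Fin 2 → ℝ)
    (hρhat : ρhat =
      ((n : ℝ) * ∑ k ∈ Icc 1 n, u k * u (k - 1)
          - (∑ k ∈ Icc 1 n, u k) * ∑ k ∈ Icc 1 n, u (k - 1))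
        / ((n : ℝ) * ∑ k ∈ Icc 1 n, u (k - 1) ^ 2 - (∑ k ∈ Icc 1 n, u (k - 1)) ^ 2))
    (hδhat : δhat =
      ((n : ℝ) * ∑ k ∈ Icc 1 n, v k * v (k - 1)
          - (∑ k ∈ Icc 1 n, v k) * ∑ k ∈ Icc 1 n, v (k - 1))
        / ((n : ℝ) * ∑ k ∈ Icc 1 n, v (k - 1) ^ 2 - (∑ k ∈ Icc 1 n, v (k - 1)) ^ 2))
    (hβhat0 : βhat 0 = (1 / (n : ℝ)) * ∑ k ∈ Icc 1 n, x k 0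
        - (1 / (2 * (n : ℝ))) * ∑ k ∈ Icc 1 n, (u (k - 1) * ρhat + v (k - 1) * δhat))
    (hβhat1 : βhat 1 = (1 / (n : ℝ)) * ∑ k ∈ Icc 1 n, x k 1
        - (1 / (2 * (n : ℝ))) * ∑ k ∈ Icc 1 n, (u (k - 1) * ρhat - v (k - 1) * δhat)) :
    ∀ (r d : ℝ) (b : Fin 2 → ℝ),
      (∀ (r' d' : ℝ) (b' : Fin 2 → ℝ), Q r d b ≤ Q r' d' b')
        ↔ (r = ρhat ∧ d = δhat ∧ b = βhat) :=
  cls_estimator_unique_minimizer_general n x u v hu hv hDu hDv Q hQ ρhat δhat βhat hρhat hδhat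
    hβhat0 hβhat1
end

section
/- Let n ∈ ℕ, let x₁, …, xₙ ∈ ℝ² with x₀ := 0, and set u_k := ⟨(1,1)ᵀ, x_k⟩, v_k := ⟨(1,−1)ᵀ, x_k⟩. For k = 1, …, n define the 4×2 matrix F_{k−1} whose top 2×2 block is (1/2)·[[u_{k−1}, v_{k−1}],[u_{k−1}, −v_{k−1}]]ᵀ and whose bottom 2×2 block is the identity I₂, and let G_n := Σ_{k=1}^n F_{k−1}·F_{k−1}ᵀ ∈ ℝ^{4×4}. If n·Σ_{k=1}^n u_{k−1}² − (Σ_{k=1}^n u_{k−1})² > 0 and n·Σ_{k=1}^n v_{k−1}² − (Σ_{k=1}^n v_{k−1})² > 0, then G_n is positive definite, i.e., γᵀ·G_n·γ > 0 for every γ ∈ ℝ⁴ with γ ≠ 0. -/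
open Matrix Finset

/-!
`γᵀ G_n γ = Σ_k ‖F_{k-1}ᵀ γ‖²`, so `G_n` is positive semidefinite and `γᵀ G_n γ = 0` forces
`F_{k-1}ᵀ γ = 0` for every `k`. Adding and subtracting the two coordinates of `F_{k-1}ᵀ γ` gives
`γ₀ u_{k-1} + (γ₂ + γ₃) = 0` and `γ₁ v_{k-1} + (γ₂ - γ₃) = 0` for all `k`. An affine function vanishing
on a sample with positive empirical variance `n Σ w² - (Σ w)²` is zero, so all of `γ` vanishes.
-/

theorem dotProduct_mulVec_sum_mul_transpose {ι m p R : Type*} [Fintype m] [Fintype p]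
    [CommRing R] (s : Finset ι) (A : ι → Matrix m p R) (γ : m → R) :
    γ ⬝ᵥ ((∑ i ∈ s, A i * (A i)ᵀ) *ᵥ γ) = ∑ i ∈ s, (A i)ᵀ *ᵥ γ ⬝ᵥ (A i)ᵀ *ᵥ γ := by
  simp only [sum_mulVec, dotProduct_sum, ← mulVec_mulVec, dotProduct_mulVec, mulVec_transpose]

theorem eq_zero_of_mul_add_eq_zero_of_card_mul_sum_sq_sub_sq_sum_ne_zero {ι K : Type*} [Field K]
    {s : Finset ι} {w : ι → K} (hw : (#s : K) * ∑ i ∈ s, w i ^ 2 - (∑ i ∈ s, w i) ^ 2 ≠ 0)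
    {a b : K} (h : ∀ i ∈ s, a * w i + b = 0) : a = 0 ∧ b = 0 := by
  have ha : a = 0 := by
    by_contra ha
    have hconst : ∀ i ∈ s, w i = -b / a := fun i hi => by
      rw [eq_div_iff ha]; linear_combination h i hi
    apply hw
    rw [sum_congr rfl hconst, sum_congr rfl fun i hi => by rw [hconst i hi]]
    simp only [sum_const, nsmul_eq_mul]
    ring
  obtain ⟨i, hi⟩ : s.Nonempty := by
    by_contra hs
    simp [not_nonempty_iff_eq_empty.mp hs] at hw
  exact ⟨ha, by simpa [ha] using h i hi⟩

theorem add_and_sub_eq_zero_of_transpose_mulVec_eq_zero (a b : ℝ) (γ : Fin 4 → ℝ)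
    (h : (!![a / 2, a / 2; b / 2, -b / 2; 1, 0; 0, 1])ᵀ *ᵥ γ = 0) :
    γ 0 * a + (γ 2 + γ 3) = 0 ∧ γ 1 * b + (γ 2 - γ 3) = 0 := by
  have h0 := congrFun h 0
  have h1 := congrFun h 1
  simp only [mulVec, dotProduct, transpose_apply, of_apply, cons_val', cons_val_zero,
    cons_val_fin_one, Fin.sum_univ_four, cons_val_one, Matrix.cons_val, one_mul, zero_mul, add_zero,
    Pi.zero_apply] at h0 h1
  exact ⟨by linear_combination h0 + h1, by linear_combination h0 - h1⟩

theorem gram_matrix_pos_def_general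
    (n : ℕ) (u v : ℕ → ℝ)
    (F : ℕ → Matrix (Fin 4) (Fin 2) ℝ)
    (hF : ∀ k, F k = !![u k / 2, u k / 2; v k / 2, -(v k) / 2; 1, 0; 0, 1])
    (G : Matrix (Fin 4) (Fin 4) ℝ)
    (hG : G = ∑ k ∈ Icc 1 n, F (k - 1) * (F (k - 1))ᵀ)
    (hDu : 0 < (n : ℝ) * ∑ k ∈ Icc 1 n, u (k - 1) ^ 2 - (∑ k ∈ Icc 1 n, u (k - 1)) ^ 2)
    (hDv : 0 < (n : ℝ) * ∑ k ∈ Icc 1 n, v (k - 1) ^ 2 - (∑ k ∈ Icc 1 n, v (k - 1)) ^ 2) :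
    ∀ γ : Fin 4 → ℝ, γ ≠ 0 → 0 < γ ⬝ᵥ (G *ᵥ γ) := by
  intro γ hγ
  rw [hG, dotProduct_mulVec_sum_mul_transpose]
  have hsq : ∀ k ∈ Icc 1 n, 0 ≤ (F (k - 1))ᵀ *ᵥ γ ⬝ᵥ (F (k - 1))ᵀ *ᵥ γ :=
    fun _ _ => sum_nonneg fun _ _ => mul_self_nonneg _
  refine (sum_nonneg hsq).lt_of_ne fun hzero => hγ ?_
  have hker : ∀ k ∈ Icc 1 n, γ 0 * u (k - 1) + (γ 2 + γ 3) = 0 ∧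
      γ 1 * v (k - 1) + (γ 2 - γ 3) = 0 := fun k hk => by
    refine add_and_sub_eq_zero_of_transpose_mulVec_eq_zero _ _ γ ?_
    rw [← hF, ← dotProduct_self_eq_zero]
    exact (sum_eq_zero_iff_of_nonneg hsq).mp hzero.symm k hk
  have hcard : (#(Icc 1 n) : ℝ) = n := by simp
  obtain ⟨h0, hsum⟩ := eq_zero_of_mul_add_eq_zero_of_card_mul_sum_sq_sub_sq_sum_ne_zero
    (w := fun k => u (k - 1)) (by rw [hcard]; exact hDu.ne') fun k hk => (hker k hk).1
  obtain ⟨h1, hdiff⟩ := eq_zero_of_mul_add_eq_zero_of_card_mul_sum_sq_sub_sq_sum_ne_zero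
    (w := fun k => v (k - 1)) (by rw [hcard]; exact hDv.ne') fun k hk => (hker k hk).2
  ext i
  fin_cases i <;> simp <;> linarith

/-- Positive definiteness of the Gram matrix `G_n = Σ_{k=1}^n F_{k−1}·F_{k−1}ᵀ`,
where `F_{k−1}` is the 4×2 matrix with top 2×2 block
`(1/2)·[[u_{k−1}, v_{k−1}],[u_{k−1}, −v_{k−1}]]ᵀ` and bottom 2×2 block `I₂`,
`u_k := x_k(0)+x_k(1)`, `v_k := x_k(0)−x_k(1)` (with `x₀ := 0`), under the
non-degeneracy assumptions `n·Σ u_{k−1}² − (Σ u_{k−1})² > 0` and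
`n·Σ v_{k−1}² − (Σ v_{k−1})² > 0`. -/
theorem gram_matrix_pos_def
    (n : ℕ) (hn : 0 < n) (x : ℕ → Fin 2 → ℝ) (hx0 : x 0 = 0)
    (u v : ℕ → ℝ)
    (hu : ∀ k, u k = x k 0 + x k 1) (hv : ∀ k, v k = x k 0 - x k 1)
    (F : ℕ → Matrix (Fin 4) (Fin 2) ℝ)
    (hF : ∀ k, F k = !![u k / 2, u k / 2; v k / 2, -(v k) / 2; 1, 0; 0, 1])
    (G : Matrix (Fin 4) (Fin 4) ℝ)
    (hG : G = ∑ k ∈ Icc 1 n, F (k - 1) * (F (k - 1))ᵀ)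
    (hDu : 0 < (n : ℝ) * ∑ k ∈ Icc 1 n, u (k - 1) ^ 2 - (∑ k ∈ Icc 1 n, u (k - 1)) ^ 2)
    (hDv : 0 < (n : ℝ) * ∑ k ∈ Icc 1 n, v (k - 1) ^ 2 - (∑ k ∈ Icc 1 n, v (k - 1)) ^ 2) :
    ∀ γ : Fin 4 → ℝ, γ ≠ 0 → 0 < γ ⬝ᵥ (G *ᵥ γ) :=
  gram_matrix_pos_def_general n u v F hF G hG hDu hDv
end

section
/- Assume γ + κ = 0 with κ > 0 and let δ := e^{γ−κ} ∈ (0,1). Let C₁, C₂ be arbitrary real 2×2 matrices, set ũ := (1/2, 1/2)ᵀ, define V_i := Σ_{ℓ=1}^2 ∫₀¹ ⟨exp((1−s)·B̃)·e_i, e_ℓ⟩ · exp(s·B̃)·C_ℓ·exp(s·B̃)ᵀ ds for i ∈ {1,2}, and put C̃ := ũ₁·V₁ + ũ₂·V₂ and C̄ := ũ₁·C₁ + ũ₂·C₂. Then vᵀ·C̃·v = ((1−δ²)/(2·log(δ⁻¹))) · vᵀ·C̄·v. -/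
/-!
For `γ + κ = 0` the symmetric matrix `B̃` kills `u = (1, 1)` and has eigenvalue `γ - κ = log δ`
on `v = (1, -1)`. So `exp((1 - s) B̃)` fixes `ũ`, and averaging the weights
`⟨exp((1 - s) B̃) eᵢ, e_ℓ⟩` against `ũ` returns `ũ_ℓ`; this makes `C̃` the entrywise integral of
`exp(s B̃) C̄ exp(s B̃)ᵀ`. Since `exp(s B̃)ᵀ v = δ^s v`, the quadratic form becomes
`(∫₀¹ δ^{2s} ds) vᵀ C̄ v = (1 - δ²) / (2 log δ⁻¹) · vᵀ C̄ v`.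
-/

open Matrix intervalIntegral
open MeasureTheory (volume)

theorem integral_exp_mul_left {c : ℝ} (hc : c ≠ 0) (a b : ℝ) :
    ∫ s in a..b, Real.exp (c * s) = (Real.exp (c * b) - Real.exp (c * a)) / c := by
  rw [integral_comp_mul_left (fun x => Real.exp x) hc, integral_exp, smul_eq_mul, inv_mul_eq_div]

namespace Matrix

variable {n : Type*} [Fintype n]

theorem pow_mulVec_of_mulVec_eq_smul [DecidableEq n] {R : Type*} [CommSemiring R]
    {A : Matrix n n R} {x : n → R} {μ : R} (h : A *ᵥ x = μ • x) (k : ℕ) :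
    (A ^ k) *ᵥ x = μ ^ k • x := by
  induction k with
  | zero => simp
  | succ k ih => rw [pow_succ, ← mulVec_mulVec, h, mulVec_smul, ih, smul_smul, pow_succ']

open scoped Norms.Operator in
theorem exp_mulVec_of_mulVec_eq_smul [DecidableEq n] {A : Matrix n n ℝ} {x : n → ℝ} {μ : ℝ}
    (h : A *ᵥ x = μ • x) : NormedSpace.exp A *ᵥ x = Real.exp μ • x := by
  have hA := (NormedSpace.exp_series_hasSum_exp' (𝕂 := ℝ) A).map (mulVec.addMonoidHomLeft x)
    (continuous_id.matrix_mulVec continuous_const)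
  have hμ := (NormedSpace.exp_series_hasSum_exp' (𝕂 := ℝ) μ).smul_const x
  rw [← Real.exp_eq_exp_ℝ] at hμ
  refine hA.unique ?_
  convert hμ using 2 with k
  simp [mulVec.addMonoidHomLeft, smul_mulVec, pow_mulVec_of_mulVec_eq_smul h, smul_smul]

theorem exp_smul_mulVec_of_mulVec_eq_zero [DecidableEq n] {A : Matrix n n ℝ} {x : n → ℝ}
    (h : A *ᵥ x = 0) (t : ℝ) : NormedSpace.exp (t • A) *ᵥ x = x := by
  have : (t • A) *ᵥ x = (0 : ℝ) • x := by rw [smul_mulVec, h, smul_zero, zero_smul]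
  rw [exp_mulVec_of_mulVec_eq_smul this, Real.exp_zero, one_smul]

open scoped Norms.Operator in
@[fun_prop]
theorem _root_.Continuous.matrix_exp_smul [DecidableEq n] {X : Type*} [TopologicalSpace X]
    {f : X → ℝ} (hf : Continuous f) (A : Matrix n n ℝ) :
    Continuous fun x => NormedSpace.exp (f x • A) :=
  NormedSpace.exp_continuous.comp (hf.smul continuous_const)

theorem sum_mul_sum_integral_eq_integral_conj_of_mulVec_eq_zero [DecidableEq n]
    {B : Matrix n n ℝ} {u : n → ℝ} (hu : B *ᵥ u = 0) (C : n → Matrix n n ℝ) (a b : n) :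
    ∑ i, u i * ∑ ℓ, ∫ s in (0:ℝ)..1,
        ((NormedSpace.exp ((1 - s) • B) *ᵥ Pi.single i 1) ⬝ᵥ Pi.single ℓ 1)
          * (NormedSpace.exp (s • B) * C ℓ * (NormedSpace.exp (s • B))ᵀ) a b
      = ∫ s in (0:ℝ)..1,
          (NormedSpace.exp (s • B) * (∑ ℓ, u ℓ • C ℓ) * (NormedSpace.exp (s • B))ᵀ) a b := by
  calc _ = ∑ i, ∑ ℓ, ∫ s in (0:ℝ)..1, u i *
        (((NormedSpace.exp ((1 - s) • B) *ᵥ Pi.single i 1) ⬝ᵥ Pi.single ℓ 1)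
          * (NormedSpace.exp (s • B) * C ℓ * (NormedSpace.exp (s • B))ᵀ) a b) := by
        simp_rw [Finset.mul_sum, intervalIntegral.integral_const_mul]
    _ = ∫ s in (0:ℝ)..1, ∑ i, ∑ ℓ, u i *
        (((NormedSpace.exp ((1 - s) • B) *ᵥ Pi.single i 1) ⬝ᵥ Pi.single ℓ 1)
          * (NormedSpace.exp (s • B) * C ℓ * (NormedSpace.exp (s • B))ᵀ) a b) := by
        rw [integral_finsetSum]
        · refine Finset.sum_congr rfl fun i _ => ?_
          rw [integral_finsetSum]
          intro ℓ _; apply Continuous.intervalIntegrable; fun_prop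
        · intro i _; apply Continuous.intervalIntegrable; fun_prop
    _ = _ := integral_congr fun s _ => by
        have hinv (ℓ : n) : ∑ i, u i * NormedSpace.exp ((1 - s) • B) ℓ i = u ℓ := by
          simpa [mulVec, dotProduct, mul_comm] using
            congrFun (exp_smul_mulVec_of_mulVec_eq_zero hu (1 - s)) ℓ
        simp only [mulVec_single_one, dotProduct_single, mul_one, col_apply]
        rw [Finset.sum_comm]
        simp only [← mul_assoc, ← Finset.sum_mul, hinv, Matrix.mul_sum, Matrix.sum_mul,
          Matrix.sum_apply, mul_smul_comm, smul_mul_assoc, smul_apply, smul_eq_mul]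

theorem dotProduct_mulVec_mul_mul_transpose_of_mulVec_eq_smul {R : Type*} [CommSemiring R]
    {E : Matrix n n R} {x : n → R} {μ : R} (h : Eᵀ *ᵥ x = μ • x)
    (C : Matrix n n R) : x ⬝ᵥ (E * C * Eᵀ) *ᵥ x = μ ^ 2 * (x ⬝ᵥ C *ᵥ x) := by
  rw [← mulVec_mulVec, ← mulVec_mulVec, dotProduct_mulVec, ← mulVec_transpose, h,
    mulVec_smul, smul_dotProduct, dotProduct_smul, smul_eq_mul, smul_eq_mul, sq, mul_assoc]

theorem dotProduct_mulVec_eq_integral {m : Type*} [Fintype m] {M : Matrix m n ℝ}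
    {F : ℝ → Matrix m n ℝ} {a b : ℝ}
    (hF : ∀ i j, IntervalIntegrable (fun s => F s i j) volume a b)
    (hM : ∀ i j, M i j = ∫ s in a..b, F s i j) (x : m → ℝ) (y : n → ℝ) :
    x ⬝ᵥ M *ᵥ y = ∫ s in a..b, x ⬝ᵥ F s *ᵥ y := by
  have hrow_int (i : m) : IntervalIntegrable (fun s => ∑ j, F s i j * y j) volume a b := by
    simpa only [Finset.sum_fn] using IntervalIntegrable.sum _ fun j _ => (hF i j).mul_const (y j)
  have hrow (i : m) : ∫ s in a..b, ∑ j, F s i j * y j = ∑ j, M i j * y j := by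
    rw [integral_finsetSum fun j _ => (hF i j).mul_const _]
    simp_rw [hM, integral_mul_const]
  simp only [dotProduct, mulVec]
  rw [integral_finsetSum fun i _ => (hrow_int i).const_mul _]
  simp_rw [intervalIntegral.integral_const_mul, hrow]

theorem fin_two_circulant_isSymm {α : Type*} (a b : α) : (!![a, b; b, a]).IsSymm := by
  ext i j; fin_cases i <;> fin_cases j <;> rfl

theorem fin_two_circulant_mulVec_one_one {R : Type*} [CommRing R] (a b : R) :
    !![a, b; b, a] *ᵥ ![1, 1] = (a + b) • ![1, 1] := by
  ext i; fin_cases i <;> simp [add_comm]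

theorem fin_two_circulant_mulVec_one_neg_one {R : Type*} [CommRing R] (a b : R) :
    !![a, b; b, a] *ᵥ ![1, -1] = (a - b) • ![1, -1] := by
  ext i; fin_cases i <;> simp <;> ring

theorem fin_two_circulant_exp_smul_transpose_mulVec_one_neg_one (a b s : ℝ) :
    (NormedSpace.exp (s • !![a, b; b, a]))ᵀ *ᵥ ![1, -1] = Real.exp (s * (a - b)) • ![1, -1] := by
  rw [((fin_two_circulant_isSymm a b).smul s).exp.eq]
  exact exp_mulVec_of_mulVec_eq_smul <| by
    rw [smul_mulVec, fin_two_circulant_mulVec_one_neg_one, smul_smul]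

end Matrix

/-- In the doubly symmetric critical case `γ + κ = 0`, `κ > 0`, with
`δ = e^{γ−κ} ∈ (0,1)`, arbitrary real 2×2 matrices `C₁, C₂`, `ũ = (1/2, 1/2)ᵀ`,
`V_i = Σ_{ℓ=1}^2 ∫₀¹ ⟨exp((1−s)·B̃)e_i, e_ℓ⟩·exp(s·B̃)·C_ℓ·exp(s·B̃)ᵀ ds`
(entrywise integrals), `C̃ = ũ₁·V₁ + ũ₂·V₂` and `C̄ = ũ₁·C₁ + ũ₂·C₂`, one has
`vᵀ·C̃·v = ((1−δ²)/(2·log(δ⁻¹)))·vᵀ·C̄·v`, where `v = (1,−1)ᵀ`. -/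
theorem vCtv_eq (γ κ : ℝ) (hcrit : γ + κ = 0) (hκ : 0 < κ)
    (δ : ℝ) (hδ : δ = Real.exp (γ - κ))
    (C : Fin 2 → Matrix (Fin 2) (Fin 2) ℝ)
    (V : Fin 2 → Matrix (Fin 2) (Fin 2) ℝ)
    (hV : ∀ i a b, V i a b = ∑ ℓ : Fin 2, ∫ s in (0:ℝ)..1,
      ((NormedSpace.exp ((1 - s) • (!![γ, κ; κ, γ] : Matrix (Fin 2) (Fin 2) ℝ))
          *ᵥ (Pi.single i 1 : Fin 2 → ℝ)) ⬝ᵥ (Pi.single ℓ 1 : Fin 2 → ℝ))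
        * ((NormedSpace.exp (s • (!![γ, κ; κ, γ] : Matrix (Fin 2) (Fin 2) ℝ))
            * C ℓ
            * (NormedSpace.exp (s • (!![γ, κ; κ, γ] : Matrix (Fin 2) (Fin 2) ℝ)))ᵀ) a b))
    (Ct Cb : Matrix (Fin 2) (Fin 2) ℝ)
    (hCt : Ct = (1 / 2 : ℝ) • V 0 + (1 / 2 : ℝ) • V 1)
    (hCb : Cb = (1 / 2 : ℝ) • C 0 + (1 / 2 : ℝ) • C 1) :
    (![1, -1] : Fin 2 → ℝ) ⬝ᵥ (Ct *ᵥ (![1, -1] : Fin 2 → ℝ))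
      = (1 - δ ^ 2) / (2 * Real.log δ⁻¹)
          * ((![1, -1] : Fin 2 → ℝ) ⬝ᵥ (Cb *ᵥ (![1, -1] : Fin 2 → ℝ))) := by
  set B : Matrix (Fin 2) (Fin 2) ℝ := !![γ, κ; κ, γ]
  set v : Fin 2 → ℝ := ![1, -1]
  have hCt_eq (a b : Fin 2) :
      Ct a b = ∫ s in (0:ℝ)..1,
        (NormedSpace.exp (s • B) * Cb * (NormedSpace.exp (s • B))ᵀ) a b := by
    have hu : B *ᵥ ((1 / 2 : ℝ) • ![1, 1]) = 0 := by
      rw [mulVec_smul, fin_two_circulant_mulVec_one_one, hcrit, zero_smul, smul_zero]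
    simpa [Fin.sum_univ_two, hCt, hCb, hV] using
      sum_mul_sum_integral_eq_integral_conj_of_mulVec_eq_zero hu C a b
  have hc : 2 * (γ - κ) ≠ 0 := by linarith
  calc v ⬝ᵥ Ct *ᵥ v
      = ∫ s in (0:ℝ)..1,
          v ⬝ᵥ (NormedSpace.exp (s • B) * Cb * (NormedSpace.exp (s • B))ᵀ) *ᵥ v :=
        dotProduct_mulVec_eq_integral
          (fun a b => (by fun_prop : Continuous _).intervalIntegrable _ _) hCt_eq v v
    _ = ∫ s in (0:ℝ)..1, Real.exp (2 * (γ - κ) * s) * (v ⬝ᵥ Cb *ᵥ v) :=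
        integral_congr fun s _ => by
          rw [dotProduct_mulVec_mul_mul_transpose_of_mulVec_eq_smul
            (fin_two_circulant_exp_smul_transpose_mulVec_one_neg_one γ κ s), ← Real.exp_nat_mul]
          congr 2
          push_cast
          ring
    _ = _ := by
        have hδ_sq : δ ^ 2 = Real.exp (2 * (γ - κ)) := by rw [hδ, ← Real.exp_nat_mul]; norm_num
        rw [intervalIntegral.integral_mul_const, integral_exp_mul_left hc, hδ_sq, hδ, Real.log_inv,
          Real.log_exp, mul_zero, mul_one, Real.exp_zero]
        field_simp
        ring
end

section
/- Assume γ + κ = 0 with κ > 0. Let C₁, C₂ be arbitrary real 2×2 matrices, set ũ := (1/2, 1/2)ᵀ, define V_i := Σ_{ℓ=1}^2 ∫₀¹ ⟨exp((1−s)·B̃)·e_i, e_ℓ⟩ · exp(s·B̃)·C_ℓ·exp(s·B̃)ᵀ ds for i ∈ {1,2}, and put C̃ := ũ₁·V₁ + ũ₂·V₂ and C̄ := ũ₁·C₁ + ũ₂·C₂. Then uᵀ·C̃·u = uᵀ·C̄·u. -/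
/-!
`B̃` annihilates `uᵀ` from the left and `ũ` from the right, so `uᵀ exp(t B̃) = uᵀ` and
`exp(t B̃) ũ = ũ`. Hence the congruence `M ↦ exp(s B̃) M exp(s B̃)ᵀ` preserves `M ↦ uᵀ M u`,
and averaging the weights `⟨exp((1-s) B̃) e_i, e_ℓ⟩` against `ũ` gives back `ũ_ℓ`; both sides
therefore equal `∑ ℓ, ũ_ℓ uᵀ C_ℓ u`.
-/

open Matrix NormedSpace

theorem NormedSpace.exp_mul_of_mul_eq_zero {𝕂 𝔸 : Type*} [RCLike 𝕂] [NormedRing 𝔸]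
    [NormedAlgebra 𝕂 𝔸] [CompleteSpace 𝔸] {a p : 𝔸} (h : a * p = 0) : exp a * p = p := by
  rw [exp_eq_tsum 𝕂, ← (expSeries_summable' (𝕂 := 𝕂) a).tsum_mul_right, tsum_eq_single 0]
  · simp
  · intro k hk
    obtain ⟨k, rfl⟩ := Nat.exists_eq_succ_of_ne_zero hk
    rw [smul_mul_assoc, pow_succ, mul_assoc, h, mul_zero, smul_zero]

namespace Matrix

section Exp

variable {m : Type*} [Fintype m] [DecidableEq m]

theorem exp_mulVec_of_mulVec_eq_zero {A : Matrix m m ℝ} {v : m → ℝ} (h : A *ᵥ v = 0) :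
    exp A *ᵥ v = v := by
  have hA : A * replicateCol m v = 0 := by rw [← replicateCol_mulVec, h]; rfl
  have hexpA : replicateCol m (exp A *ᵥ v) = replicateCol m v := by
    let _ : NormedRing (Matrix m m ℝ) := Matrix.linftyOpNormedRing
    let _ : NormedAlgebra ℝ (Matrix m m ℝ) := Matrix.linftyOpNormedAlgebra
    rw [replicateCol_mulVec]
    exact exp_mul_of_mul_eq_zero (𝕂 := ℝ) hA
  funext i
  exact congrFun (congrFun hexpA i) i

theorem vecMul_exp_of_vecMul_eq_zero {A : Matrix m m ℝ} {v : m → ℝ} (h : v ᵥ* A = 0) :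
    v ᵥ* exp A = v := by
  rw [← mulVec_transpose, ← exp_transpose]
  exact exp_mulVec_of_mulVec_eq_zero (by rwa [mulVec_transpose])

theorem continuous_exp_smul (A : Matrix m m ℝ) : Continuous fun t : ℝ => exp (t • A) := by
  let _ : NormedRing (Matrix m m ℝ) := Matrix.linftyOpNormedRing
  let _ : NormedAlgebra ℝ (Matrix m m ℝ) := Matrix.linftyOpNormedAlgebra
  exact (continuous_iff_continuousAt.2 fun x => (exp_analytic (𝕂 := ℝ) x).continuousAt).comp
    (continuous_id.smul continuous_const)

end Exp

section EntrywiseIntegral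

variable {m n : Type*}

noncomputable def entrywiseIntegral (f : ℝ → Matrix m n ℝ) (a b : ℝ) : Matrix m n ℝ :=
  of fun i j => ∫ s in a..b, f s i j

theorem sum_smul_entrywiseIntegral {ι : Type*} (t : Finset ι) (c : ι → ℝ)
    {f : ι → ℝ → Matrix m n ℝ} (hf : ∀ k, Continuous (f k)) (a b : ℝ) :
    ∑ k ∈ t, c k • entrywiseIntegral (f k) a b
      = entrywiseIntegral (fun s => ∑ k ∈ t, c k • f k s) a b := by
  ext i j
  have hint : ∀ k ∈ t, IntervalIntegrable (fun s => c k * f k s i j) MeasureTheory.volume a b :=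
    fun k _ => (((hf k).matrix_elem i j).const_mul (c k)).intervalIntegrable a b
  simp only [entrywiseIntegral, sum_apply, smul_apply, of_apply, smul_eq_mul,
    intervalIntegral.integral_finsetSum hint, intervalIntegral.integral_const_mul]

theorem dotProduct_entrywiseIntegral_mulVec [Fintype m] [Fintype n] {f : ℝ → Matrix m n ℝ}
    (hf : Continuous f) (a b : ℝ) (u : m → ℝ) (v : n → ℝ) :
    u ⬝ᵥ (entrywiseIntegral f a b *ᵥ v) = ∫ s in a..b, u ⬝ᵥ (f s *ᵥ v) := by
  have hrow : ∀ i, (entrywiseIntegral f a b *ᵥ v) i = ∫ s in a..b, (f s *ᵥ v) i := fun i => by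
    simp only [mulVec, dotProduct, entrywiseIntegral, of_apply,
      ← intervalIntegral.integral_mul_const]
    exact (intervalIntegral.integral_finsetSum fun j _ =>
      ((hf.matrix_elem i j).mul_const (v j)).intervalIntegrable a b).symm
  simp only [dotProduct, hrow, ← intervalIntegral.integral_const_mul]
  refine (intervalIntegral.integral_finsetSum fun i _ => ?_).symm
  exact (Continuous.const_mul (by fun_prop) _).intervalIntegrable a b

end EntrywiseIntegral

variable {n : Type*} [Fintype n]

theorem dotProduct_mul_mul_transpose_mulVec {R : Type*} [CommSemiring R] (E M : Matrix n n R)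
    {u : n → R} (hE : u ᵥ* E = u) : u ⬝ᵥ ((E * M * Eᵀ) *ᵥ u) = u ⬝ᵥ (M *ᵥ u) := by
  rw [← mulVec_mulVec, mulVec_transpose, hE, ← mulVec_mulVec, dotProduct_mulVec, hE]

theorem dotProduct_sum_smul_mulVec_of_left_right_fixed {E : ℝ → Matrix n n ℝ}
    (hE : Continuous E) {u w : n → ℝ} (hu : ∀ t, u ᵥ* E t = u) (hw : ∀ t, E t *ᵥ w = w)
    (C V : n → Matrix n n ℝ)
    (hV : ∀ i, V i = ∑ ℓ, entrywiseIntegral (fun s => E (1 - s) ℓ i • (E s * C ℓ * (E s)ᵀ)) 0 1) :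
    u ⬝ᵥ ((∑ i, w i • V i) *ᵥ u) = u ⬝ᵥ ((∑ ℓ, w ℓ • C ℓ) *ᵥ u) := by
  have hweights : ∀ ℓ s, ∑ i, w i * E (1 - s) ℓ i = w ℓ := fun ℓ s => by
    simpa [mulVec, dotProduct, mul_comm] using congrFun (hw (1 - s)) ℓ
  have hsum : ∑ i, w i • V i
      = ∑ ℓ, entrywiseIntegral (fun s => w ℓ • (E s * C ℓ * (E s)ᵀ)) 0 1 := by
    simp_rw [hV, Finset.smul_sum]
    rw [Finset.sum_comm]
    refine Finset.sum_congr rfl fun ℓ _ => ?_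
    rw [sum_smul_entrywiseIntegral _ _ (fun i => by fun_prop)]
    simp_rw [smul_smul, ← Finset.sum_smul, hweights]
  rw [hsum, sum_mulVec, dotProduct_sum, sum_mulVec, dotProduct_sum]
  refine Finset.sum_congr rfl fun ℓ _ => ?_
  rw [dotProduct_entrywiseIntegral_mulVec (by fun_prop)]
  simp [smul_mulVec, dotProduct_mul_mul_transpose_mulVec _ _ (hu _)]

end Matrix

theorem uCtu_eq_general (γ κ : ℝ) (hcrit : γ + κ = 0)
    (C : Fin 2 → Matrix (Fin 2) (Fin 2) ℝ)
    (V : Fin 2 → Matrix (Fin 2) (Fin 2) ℝ)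
    (hV : ∀ i a b, V i a b = ∑ ℓ : Fin 2, ∫ s in (0:ℝ)..1,
      ((NormedSpace.exp ((1 - s) • (!![γ, κ; κ, γ] : Matrix (Fin 2) (Fin 2) ℝ))
          *ᵥ (Pi.single i 1 : Fin 2 → ℝ)) ⬝ᵥ (Pi.single ℓ 1 : Fin 2 → ℝ))
        * ((NormedSpace.exp (s • (!![γ, κ; κ, γ] : Matrix (Fin 2) (Fin 2) ℝ))
            * C ℓ
            * (NormedSpace.exp (s • (!![γ, κ; κ, γ] : Matrix (Fin 2) (Fin 2) ℝ)))ᵀ) a b))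
    (Ct Cb : Matrix (Fin 2) (Fin 2) ℝ)
    (hCt : Ct = (1 / 2 : ℝ) • V 0 + (1 / 2 : ℝ) • V 1)
    (hCb : Cb = (1 / 2 : ℝ) • C 0 + (1 / 2 : ℝ) • C 1) :
    (![1, 1] : Fin 2 → ℝ) ⬝ᵥ (Ct *ᵥ (![1, 1] : Fin 2 → ℝ))
      = (![1, 1] : Fin 2 → ℝ) ⬝ᵥ (Cb *ᵥ (![1, 1] : Fin 2 → ℝ)) := by
  set B : Matrix (Fin 2) (Fin 2) ℝ := !![γ, κ; κ, γ]
  have hκγ : κ = -γ := by linarith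
  have hBu : (![1, 1] : Fin 2 → ℝ) ᵥ* B = 0 := by
    ext i; fin_cases i <;> simp [B, vecMul, dotProduct, hκγ]
  have hBw : B *ᵥ (fun _ => 1 / 2 : Fin 2 → ℝ) = 0 := by
    ext i; fin_cases i <;> simp [B, mulVec, dotProduct, hκγ]
  have key := dotProduct_sum_smul_mulVec_of_left_right_fixed (continuous_exp_smul B)
    (fun t => vecMul_exp_of_vecMul_eq_zero (by rw [vecMul_smul, hBu, smul_zero]))
    (fun t => exp_mulVec_of_mulVec_eq_zero (by rw [smul_mulVec, hBw, smul_zero])) C V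
    (fun i => by ext a b; simp [entrywiseIntegral, hV, B])
  simpa [hCt, hCb, Fin.sum_univ_two] using key

/-- In the doubly symmetric critical case `γ + κ = 0`, `κ > 0`, with arbitrary real
2×2 matrices `C₁, C₂`, `ũ = (1/2, 1/2)ᵀ`,
`V_i = Σ_{ℓ=1}^2 ∫₀¹ ⟨exp((1−s)·B̃)e_i, e_ℓ⟩·exp(s·B̃)·C_ℓ·exp(s·B̃)ᵀ ds`
(entrywise integrals), `C̃ = ũ₁·V₁ + ũ₂·V₂` and `C̄ = ũ₁·C₁ + ũ₂·C₂`, one has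
`uᵀ·C̃·u = uᵀ·C̄·u`, where `u = (1,1)ᵀ`. -/
theorem uCtu_eq (γ κ : ℝ) (hcrit : γ + κ = 0) (hκ : 0 < κ)
    (C : Fin 2 → Matrix (Fin 2) (Fin 2) ℝ)
    (V : Fin 2 → Matrix (Fin 2) (Fin 2) ℝ)
    (hV : ∀ i a b, V i a b = ∑ ℓ : Fin 2, ∫ s in (0:ℝ)..1,
      ((NormedSpace.exp ((1 - s) • (!![γ, κ; κ, γ] : Matrix (Fin 2) (Fin 2) ℝ))
          *ᵥ (Pi.single i 1 : Fin 2 → ℝ)) ⬝ᵥ (Pi.single ℓ 1 : Fin 2 → ℝ))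
        * ((NormedSpace.exp (s • (!![γ, κ; κ, γ] : Matrix (Fin 2) (Fin 2) ℝ))
            * C ℓ
            * (NormedSpace.exp (s • (!![γ, κ; κ, γ] : Matrix (Fin 2) (Fin 2) ℝ)))ᵀ) a b))
    (Ct Cb : Matrix (Fin 2) (Fin 2) ℝ)
    (hCt : Ct = (1 / 2 : ℝ) • V 0 + (1 / 2 : ℝ) • V 1)
    (hCb : Cb = (1 / 2 : ℝ) • C 0 + (1 / 2 : ℝ) • C 1) :
    (![1, 1] : Fin 2 → ℝ) ⬝ᵥ (Ct *ᵥ (![1, 1] : Fin 2 → ℝ))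
      = (![1, 1] : Fin 2 → ℝ) ⬝ᵥ (Cb *ᵥ (![1, 1] : Fin 2 → ℝ)) :=
  uCtu_eq_general γ κ hcrit C V hV Ct Cb hCt hCb
end
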